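/- Define g : [0,∞) → [0,∞) by g(r) = r/(log r)² for r > e² and g(r) = (e/2)² for 0 ≤ r ≤ e². Then for every b > 0 and every k ∈ ℕ there exist constants K > 0 and t₀ > e² such that for all t ≥ t₀: ∫_t^∞ r^k e^{−b g(r)} dr ≤ K·t^{2k+2}·e^{−b g(t)}. In particular, g satisfies Assumption 1 with l(k) = 2k + 2. -/

import Mathlib

/-!
For `r > e²` the weight is `g(r) = r / log² r` with `g'(r) = (log r - 2) / log³ r`, and
`log² r ≤ 16 √r` gives `g'(r) ≥ 1 / (32 √r)` once `r ≥ e⁴`. So for `k < n` and `r` so large that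
`b √r ≥ 64 n`, the integrand `r^k e^{-b g(r)}` is dominated by `-F'(r)`, where
`F(r) = r^n e^{-b g(r)}`. Since `g(r) ≥ √r / 16`, `F` vanishes at infinity, and the tail integral
from `t` is at most `F(t)`: the bound holds with `K = 1`, already for the exponent `k + 1`.
-/

noncomputable section

/-- The sub-exponential weight `g(r) = r/(log r)²` for `r > e²`, continued by the
constant `(e/2)²` for `0 ≤ r ≤ e²` (equation (2.12) of the paper with `p = 2`). -/
def subexpWeight (r : ℝ) : ℝ :=
  if Real.exp 2 < r then r / (Real.log r) ^ 2 else (Real.exp 1 / 2) ^ 2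

open Real MeasureTheory Set Filter Topology

theorem setIntegral_Ioi_le_of_le_neg_deriv {f F F' : ℝ → ℝ} {t : ℝ}
    (hF : ∀ x ∈ Ici t, HasDerivAt F (F' x) x) (hf : ∀ x ∈ Ioi t, 0 ≤ f x)
    (hfF : ∀ x ∈ Ioi t, f x ≤ -F' x) (hlim : Tendsto F atTop (𝓝 0)) :
    ∫ x in Ioi t, f x ≤ F t := by
  have hderiv : ∀ x ∈ Ici t, HasDerivAt (-F) (-F' x) x := fun x hx => (hF x hx).neg
  have hnonneg : ∀ x ∈ Ioi t, 0 ≤ -F' x := fun x hx => (hf x hx).trans (hfF x hx)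
  have hlim' : Tendsto (-F) atTop (𝓝 0) := by
    rw [← neg_zero]; exact hlim.neg
  calc ∫ x in Ioi t, f x ≤ ∫ x in Ioi t, -F' x :=
        integral_mono_of_nonneg (ae_restrict_of_forall_mem measurableSet_Ioi hf)
          (integrableOn_Ioi_deriv_of_nonneg' hderiv hnonneg hlim')
          (ae_restrict_of_forall_mem measurableSet_Ioi hfF)
    _ = F t := by
      rw [integral_Ioi_of_hasDerivAt_of_nonneg' hderiv hnonneg hlim', Pi.neg_apply, zero_sub,
        neg_neg]

theorem log_sq_le_sixteen_mul_sqrt {x : ℝ} (hx : 1 ≤ x) : log x ^ 2 ≤ 16 * √x := by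
  have hlog : log x ≤ 4 * x ^ (1 / 4 : ℝ) := by
    simpa [div_eq_mul_inv, mul_comm] using
      log_le_rpow_div (by linarith) (by norm_num : (0:ℝ) < 1 / 4)
  calc log x ^ 2 ≤ (4 * x ^ (1 / 4 : ℝ)) ^ 2 := by gcongr; exact log_nonneg hx
    _ = 16 * √x := by
      rw [mul_pow, ← rpow_mul_natCast (by linarith), sqrt_eq_rpow]; norm_num

theorem subexpWeight_of_exp_two_lt {r : ℝ} (hr : exp 2 < r) :
    subexpWeight r = r / log r ^ 2 :=
  if_pos hr

theorem sqrt_div_sixteen_le_subexpWeight {r : ℝ} (hr : exp 2 < r) :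
    √r / 16 ≤ subexpWeight r := by
  have hr1 : 1 ≤ r := (one_le_exp (by norm_num)).trans hr.le
  have hlog : 0 < log r := log_pos (by linarith [add_one_le_exp (2:ℝ)])
  rw [subexpWeight_of_exp_two_lt hr, div_le_div_iff₀ (by norm_num) (by positivity)]
  have hsq := sq_sqrt (zero_le_one.trans hr1)
  nlinarith [log_sq_le_sixteen_mul_sqrt hr1, sqrt_nonneg r]

theorem hasDerivAt_subexpWeight {r : ℝ} (hr : exp 2 < r) :
    HasDerivAt subexpWeight ((log r - 2) / log r ^ 3) r := by
  have hr0 : 0 < r := (exp_pos 2).trans hr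
  have hlog : log r ≠ 0 := (log_pos (by linarith [add_one_le_exp (2:ℝ)])).ne'
  have hquot : HasDerivAt (fun x => x / log x ^ 2) ((log r - 2) / log r ^ 3) r := by
    refine ((hasDerivAt_id' r).div ((hasDerivAt_log hr0.ne').fun_pow 2)
      (pow_ne_zero 2 hlog)).congr_deriv ?_
    field_simp
    ring
  refine hquot.congr_of_eventuallyEq ?_
  filter_upwards [Ioi_mem_nhds hr] with x hx using subexpWeight_of_exp_two_lt hx

theorem tendsto_pow_mul_exp_neg_mul_subexpWeight {b : ℝ} (hb : 0 < b) (n : ℕ) :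
    Tendsto (fun x => x ^ n * exp (-b * subexpWeight x)) atTop (𝓝 0) := by
  have hsqrt : Tendsto (fun x => √x ^ ((2 * n : ℕ) : ℝ) * exp (-(b / 16) * √x)) atTop (𝓝 0) :=
    (tendsto_rpow_mul_exp_neg_mul_atTop_nhds_zero _ _ (by positivity)).comp tendsto_sqrt_atTop
  refine squeeze_zero' ?_ ?_ hsqrt
  · filter_upwards [eventually_ge_atTop 0] with x hx using by positivity
  · filter_upwards [eventually_gt_atTop (exp 2)] with x hx
    have hweight := sqrt_div_sixteen_le_subexpWeight hx
    have hx0 : 0 ≤ x := ((exp_pos 2).trans hx).le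
    rw [rpow_natCast, pow_mul, sq_sqrt hx0]
    exact mul_le_mul_of_nonneg_left (exp_le_exp.2 (by nlinarith)) (pow_nonneg hx0 n)

theorem inv_thirtyTwo_mul_sqrt_le_log_sub_two_div_log_pow_three {r : ℝ} (hr : exp 4 ≤ r) :
    (32 * √r)⁻¹ ≤ (log r - 2) / log r ^ 3 := by
  have hr1 : 1 ≤ r := (one_le_exp (by norm_num)).trans hr
  have hlog : 4 ≤ log r := (le_log_iff_exp_le (by linarith)).2 hr
  calc (32 * √r)⁻¹ ≤ (2 * log r ^ 2)⁻¹ :=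
        inv_anti₀ (by positivity) (by linarith [log_sq_le_sixteen_mul_sqrt hr1])
    _ ≤ (log r - 2) / log r ^ 3 := by
        rw [le_div_iff₀ (by positivity)]
        field_simp
        linarith

theorem hasDerivAt_pow_mul_exp_neg_mul_subexpWeight (b : ℝ) (n : ℕ) {r : ℝ} (hr : exp 2 < r) :
    HasDerivAt (fun x => x ^ n * exp (-b * subexpWeight x))
      ((n * r ^ (n - 1) - b * ((log r - 2) / log r ^ 3) * r ^ n) * exp (-b * subexpWeight r)) r :=
  ((hasDerivAt_pow n r).mul ((hasDerivAt_subexpWeight hr).const_mul (-b)).exp).congr_deriv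
    (by ring)

theorem pow_le_mul_log_sub_two_div_log_pow_three_mul_pow_sub {b r : ℝ} {k n : ℕ} (hkn : k < n)
    (hr : exp 4 ≤ r) (hbr : 64 * n ≤ b * √r) :
    r ^ k ≤ b * ((log r - 2) / log r ^ 3) * r ^ n - n * r ^ (n - 1) := by
  have hr1 : 1 ≤ r := (one_le_exp (by norm_num)).trans hr
  have hpow : r ^ n = r ^ (n - 1) * (√r * √r) := by
    rw [mul_self_sqrt (by linarith), ← pow_succ, Nat.sub_add_cancel (by omega)]
  have hk : r ^ k ≤ r ^ (n - 1) := pow_le_pow_right₀ hr1 (by omega)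
  have hn : (1 : ℝ) ≤ n := by exact_mod_cast (by omega : 1 ≤ n)
  have hderiv := inv_thirtyTwo_mul_sqrt_le_log_sub_two_div_log_pow_three hr
  have hsqrt : 0 < √r := sqrt_pos.2 (by linarith)
  have hb : 0 < b := by nlinarith
  have hmain : 2 * n * r ^ (n - 1) ≤ b * ((log r - 2) / log r ^ 3) * r ^ n := by
    calc 2 * n * r ^ (n - 1) ≤ b * √r / 32 * r ^ (n - 1) := by gcongr; linarith
      _ = b * (32 * √r)⁻¹ * r ^ n := by rw [hpow]; field_simp
      _ ≤ b * ((log r - 2) / log r ^ 3) * r ^ n := by gcongr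
  linarith [le_mul_of_one_le_left (pow_nonneg (zero_le_one.trans hr1) (n - 1)) hn]

theorem setIntegral_Ioi_pow_mul_exp_neg_mul_subexpWeight_le {b t : ℝ} (hb : 0 < b) {k n : ℕ}
    (hkn : k < n) (ht : max (exp 4) ((64 * n / b) ^ 2) ≤ t) :
    ∫ r in Ioi t, r ^ k * exp (-b * subexpWeight r) ≤ t ^ n * exp (-b * subexpWeight t) := by
  have hlarge : ∀ r, t ≤ r → exp 4 ≤ r ∧ 64 * n ≤ b * √r := by
    intro r hr
    have hr' := max_le_iff.1 (ht.trans hr)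
    refine ⟨hr'.1, (div_le_iff₀' hb).1 ?_⟩
    exact (le_sqrt (by positivity) (by linarith [exp_pos 4])).2 hr'.2
  have hexp : exp 2 < exp 4 := exp_lt_exp.2 (by norm_num)
  refine setIntegral_Ioi_le_of_le_neg_deriv (fun x hx =>
    hasDerivAt_pow_mul_exp_neg_mul_subexpWeight b n (hexp.trans_le (hlarge x hx).1)) ?_ ?_
    (tendsto_pow_mul_exp_neg_mul_subexpWeight hb n)
  · intro x hx
    have := (exp_pos 4).trans_le (hlarge x hx.out.le).1
    positivity
  · intro x hx
    obtain ⟨hx4, hbx⟩ := hlarge x hx.out.le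
    rw [← neg_mul, neg_sub]
    exact mul_le_mul_of_nonneg_right
      (pow_le_mul_log_sub_two_div_log_pow_three_mul_pow_sub hkn hx4 hbx) (exp_pos _).le

/-- For every `b > 0` and `k ∈ ℕ` there are constants `K > 0` and `t₀ > e²` such that
`∫_t^∞ r^k e^{−b g(r)} dr ≤ K·t^{2k+2}·e^{−b g(t)}` for all `t ≥ t₀`, where
`g = subexpWeight`; in particular `g` satisfies Assumption 1 with `l(k) = 2k + 2`. -/
theorem subexp_tail_integral_bound :
    ∀ b : ℝ, 0 < b → ∀ k : ℕ, ∃ K : ℝ, 0 < K ∧ ∃ t₀ : ℝ, Real.exp 2 < t₀ ∧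
      ∀ t : ℝ, t₀ ≤ t →
        (∫ r in Set.Ioi t, r ^ k * Real.exp (-b * subexpWeight r))
          ≤ K * t ^ (2 * k + 2) * Real.exp (-b * subexpWeight t) := by
  intro b hb k
  refine ⟨1, one_pos, max (exp 4) ((64 * (2 * k + 2 : ℕ) / b) ^ 2), ?_, fun t ht => ?_⟩
  · exact (exp_lt_exp.2 (by norm_num)).trans_le (le_max_left _ _)
  · rw [one_mul]
    exact setIntegral_Ioi_pow_mul_exp_neg_mul_subexpWeight_le hb (by omega) ht

end
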